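/- arXiv:1707.00372 — 4 statements merged into one kernel-verified Lean document; each statement's English description precedes it below -/
import Mathlib

section
/- If a signal f ∈ ℂⁿ is a sum of r complex exponentials f[k] = Σ_{j=0}^{r-1} c_j u_j^k with distinct n-th roots of unity u_j and nonzero coefficients c_j, then for any d > r the wrap-around Hankel matrix H_d(f) has rank exactly r. -/
open Matrix BigOperators Finset

noncomputable section

/-- Zero-padding of a length-`d` filter to a signal on `ZMod n`. -/
def zpad {n d : ℕ} [NeZero n] (ψ : Fin d → ℝ) : ZMod n → ℝ :=
  fun k => if h : (ZMod.val k) < d then ψ ⟨ZMod.val k, h⟩ else 0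

/-- Circular convolution of two signals on `ZMod n`. -/
def cconv {n : ℕ} [NeZero n] (f g : ZMod n → ℝ) : ZMod n → ℝ :=
  fun k => ∑ l : ZMod n, f l * g (k - l)

/-- Index flip of a signal on `ZMod n`. -/
def cflip {n : ℕ} (g : ZMod n → ℝ) : ZMod n → ℝ := fun k => g (-k)

/-- Wrap-around Hankel matrix `H_d(f)` of `f : ZMod n → ℝ`. -/
def hankel {n : ℕ} (d : ℕ) (f : ZMod n → ℝ) : Matrix (ZMod n) (Fin d) ℝ :=
  Matrix.of fun i j => f (i + ((j : ℕ) : ZMod n))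

/-- Frobenius (trace) inner product of two matrices. -/
def frobInner {I J : Type*} [Fintype I] [Fintype J] (A B : Matrix I J ℝ) : ℝ :=
  ∑ i, ∑ j, A i j * B i j

/-- Orthonormal Hankel basis element `E_k = (1/√d) H_d(e_k)`. -/
def hankE {n : ℕ} [NeZero n] (d : ℕ) (k : ZMod n) : Matrix (ZMod n) (Fin d) ℝ :=
  (Real.sqrt d)⁻¹ • hankel d (Pi.single k 1)

/-- Generalized (left) inverse of the Hankel lifting. -/
def hdag {n d : ℕ} [NeZero n] (B : Matrix (ZMod n) (Fin d) ℝ) : ZMod n → ℝ :=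
  fun k => (Real.sqrt d)⁻¹ * frobInner (hankE d k) B

/-- Wrap-around Hankel matrix of a complex signal. -/
def hankelC {n : ℕ} (d : ℕ) (f : ZMod n → ℂ) : Matrix (ZMod n) (Fin d) ℂ :=
  Matrix.of fun i j => f (i + ((j : ℕ) : ZMod n))


private lemma pow_mod_eq {n : ℕ} {x : ℂ} (hx : x ^ n = 1) (a : ℕ) :
    x ^ (a % n) = x ^ a := by
  conv_rhs => rw [← Nat.div_add_mod a n]
  rw [pow_add, pow_mul, hx, one_pow, one_mul]

private lemma r_le_n {n r : ℕ} [NeZero n] (u : Fin r → ℂ)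
    (hu : Function.Injective u) (hroot : ∀ j, u j ^ n = 1) : r ≤ n := by
  have hn : 0 < n := Nat.pos_of_ne_zero (NeZero.ne n)
  have hsub : (Finset.univ.image u) ⊆ (Polynomial.nthRoots n (1 : ℂ)).toFinset := by
    intro x hx
    obtain ⟨j, _, rfl⟩ := Finset.mem_image.mp hx
    exact Multiset.mem_toFinset.mpr ((Polynomial.mem_nthRoots hn).mpr (hroot j))
  calc r = (Finset.univ.image u).card := by
        rw [Finset.card_image_of_injective _ hu, Finset.card_univ, Fintype.card_fin]
    _ ≤ (Polynomial.nthRoots n (1 : ℂ)).toFinset.card := Finset.card_le_card hsub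
    _ ≤ Multiset.card (Polynomial.nthRoots n (1 : ℂ)) := Multiset.toFinset_card_le _
    _ ≤ n := Polynomial.card_nthRoots n 1

/-- if `f` is a sum of `r` complex exponentials with distinct
`n`-th roots of unity as bases and nonzero coefficients, then for any
`d > r` the wrap-around Hankel matrix `H_d(f)` has rank exactly `r`. -/
theorem hankel_rank_of_exponential_sum {n r d : ℕ} [NeZero n]
    (u : Fin r → ℂ) (hu : Function.Injective u) (hroot : ∀ j, u j ^ n = 1)
    (c : Fin r → ℂ) (hc : ∀ j, c j ≠ 0)
    (f : ZMod n → ℂ)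
    (hf : ∀ k : ZMod n, f k = ∑ j : Fin r, c j * u j ^ (ZMod.val k))
    (hrd : r < d) :
    (hankelC d f).rank = r := by
  classical
  have hrn : r ≤ n := r_le_n u hu hroot
  -- factorization
  set P : Matrix (ZMod n) (Fin r) ℂ := Matrix.of fun i m => u m ^ (ZMod.val i) with hP
  set Q : Matrix (Fin r) (Fin d) ℂ := Matrix.of fun m l => c m * u m ^ (l : ℕ) with hQ
  have hentry : ∀ (i : ZMod n) (l : ℕ),
      f (i + (l : ZMod n)) = ∑ m : Fin r, c m * u m ^ (ZMod.val i + l) := by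
    intro i l
    rw [hf]
    refine Finset.sum_congr rfl fun m _ => ?_
    congr 1
    have h1 : ZMod.val (i + (l : ZMod n)) = (ZMod.val i + l) % n := by
      rw [ZMod.val_add, ZMod.val_natCast, Nat.add_mod_mod]
    rw [h1, pow_mod_eq (hroot m)]
  have hfac : hankelC d f = P * Q := by
    ext i l
    simp only [hankelC, Matrix.of_apply, Matrix.mul_apply, hP, hQ]
    rw [hentry i l]
    refine Finset.sum_congr rfl fun m _ => ?_
    rw [pow_add]; ring
  -- upper bound
  have hub : (hankelC d f).rank ≤ r := by
    rw [hfac]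
    calc (P * Q).rank ≤ Q.rank := Matrix.rank_mul_le_right P Q
      _ ≤ Fintype.card (Fin r) := Matrix.rank_le_card_height Q
      _ = r := Fintype.card_fin r
  -- selection matrices
  set E : Matrix (Fin r) (ZMod n) ℂ :=
    Matrix.of fun k i => if i = ((k : ℕ) : ZMod n) then 1 else 0 with hE
  set G : Matrix (Fin d) (Fin r) ℂ :=
    Matrix.of fun l l' => if l = Fin.castLE (le_of_lt hrd) l' then 1 else 0 with hG
  have hsel : E * hankelC d f * G =
      (Matrix.vandermonde u)ᵀ * (Matrix.diagonal c * Matrix.vandermonde u) := by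
    have hEA : ∀ (A : Matrix (ZMod n) (Fin d) ℂ) (k : Fin r) (l : Fin d),
        (E * A) k l = A ((k : ℕ) : ZMod n) l := by
      intro A k l
      simp only [Matrix.mul_apply, hE, Matrix.of_apply, ite_mul, one_mul, zero_mul]
      rw [Finset.sum_ite_eq' Finset.univ ((k : ℕ) : ZMod n) (fun i => A i l)]
      simp
    ext k l'
    rw [Matrix.mul_apply]
    have : ∀ l : Fin d, (E * hankelC d f) k l * G l l' =
        if l = Fin.castLE (le_of_lt hrd) l' then
          hankelC d f ((k : ℕ) : ZMod n) l else 0 := by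
      intro l
      rw [hEA, hG]
      simp only [Matrix.of_apply, mul_ite, mul_one, mul_zero]
    simp only [this]
    rw [Finset.sum_ite_eq' Finset.univ (Fin.castLE (le_of_lt hrd) l') _]
    simp only [Finset.mem_univ, if_true]
    have hval : ZMod.val (((k : ℕ) : ZMod n)) = (k : ℕ) := by
      rw [ZMod.val_natCast, Nat.mod_eq_of_lt (lt_of_lt_of_le k.isLt hrn)]
    show f (((k : ℕ) : ZMod n) + (((Fin.castLE (le_of_lt hrd) l' : Fin d) : ℕ) : ZMod n)) = _
    rw [show ((Fin.castLE (le_of_lt hrd) l' : Fin d) : ℕ) = (l' : ℕ) from rfl,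
      hentry, hval]
    rw [Matrix.mul_apply]
    refine Finset.sum_congr rfl fun m _ => ?_
    simp only [Matrix.transpose_apply, Matrix.vandermonde, Matrix.mul_apply, Matrix.of_apply,
      Matrix.diagonal_apply, ite_mul, zero_mul]
    rw [Finset.sum_congr rfl (fun x _ => by rw [show (if m = x then c m * u x ^ (l' : ℕ) else 0) = (if m = x then c x * u x ^ (l' : ℕ) else 0) from by split <;> simp_all]),
      Finset.sum_ite_eq Finset.univ m (fun j => c j * u j ^ (l' : ℕ))]
    simp only [Finset.mem_univ, if_true]
    rw [pow_add]; ring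
  -- lower bound
  have hdet1 : IsUnit ((Matrix.vandermonde u)ᵀ).det := by
    rw [Matrix.det_transpose]
    exact (Matrix.det_vandermonde_ne_zero_iff.mpr hu).isUnit
  have hdet2 : IsUnit (Matrix.diagonal c * Matrix.vandermonde u).det := by
    rw [Matrix.det_mul, Matrix.det_diagonal]
    exact ((mul_ne_zero (Finset.prod_ne_zero_iff.mpr fun j _ => hc j)
      (Matrix.det_vandermonde_ne_zero_iff.mpr hu))).isUnit
  have hlb : r ≤ (hankelC d f).rank := by
    have h1 : (E * hankelC d f * G).rank = r := by
      rw [hsel]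
      rw [Matrix.rank_of_isUnit _ ((Matrix.isUnit_iff_isUnit_det _).mpr
        (by rw [Matrix.det_mul]; exact hdet1.mul hdet2))]
      exact Fintype.card_fin r
    calc r = (E * hankelC d f * G).rank := h1.symm
      _ ≤ (E * hankelC d f).rank := Matrix.rank_mul_le_left _ _
      _ ≤ (hankelC d f).rank := Matrix.rank_mul_le_right _ _
  exact le_antisymm hub hlb
end
end

section
/- (Rank bound for extended Hankel matrix) Let Z = [z_1,…,z_p] where each z_i = f ⊛ h̄_i for filters h_i ∈ ℝ^m with m ≤ n. Then the extended Hankel matrix H_{d|p}(Z) = [H_d(z_1) … H_d(z_p)] factors as H_n(f)·[C_d(h_1) … C_d(h_p)], and consequently rank H_{d|p}(Z) ≤ min{rank H_n(f), p·d}. -/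
/-! Convolution with a flipped filter is cross-correlation, so the entry `(i, (c, j))` of
`H_{d|p}(Z)` pairs row `i` of `H_n(f)` with the filter `h_c` shifted down by `j`. The rank
bound is then that of a product with `p·d` columns. -/

open Matrix BigOperators Finset

noncomputable section

/-- Extended Hankel matrix `H_{d|p}(Z)` of a `p`-channel signal. -/
def hankelExt {n : ℕ} (d p : ℕ) (Z : Matrix (ZMod n) (Fin p) ℝ) :
    Matrix (ZMod n) (Fin p × Fin d) ℝ :=
  Matrix.of fun i cj => Z (i + ((cj.2 : ℕ) : ZMod n)) cj.1

/-- Generalized (left) inverse of the extended Hankel lifting. -/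
def hdagExt {n d p : ℕ} [NeZero n] (Y : Matrix (ZMod n) (Fin p × Fin d) ℝ) :
    Matrix (ZMod n) (Fin p) ℝ :=
  Matrix.of fun k c => hdag (Matrix.of fun i j => Y i (c, j)) k

/-- Entrywise ReLU on matrices. -/
def reluM {I J : Type*} (A : Matrix I J ℝ) : Matrix I J ℝ :=
  Matrix.of fun i j => max 0 (A i j)

/-- Square wrap-around Hankel matrix `H_n(f)`. -/
def hankelSq {n : ℕ} (f : ZMod n → ℝ) : Matrix (ZMod n) (ZMod n) ℝ :=
  Matrix.of fun i j => f (i + j)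

/-- Side-by-side circulant-type matrices `[C_d(h_1) … C_d(h_p)]`. -/
def circBlocks {n : ℕ} [NeZero n] (d p : ℕ) (h : Fin p → Fin m → ℝ) :
    Matrix (ZMod n) (Fin p × Fin d) ℝ :=
  Matrix.of fun l cj => zpad (h cj.1) (l - ((cj.2 : ℕ) : ZMod n))

theorem cconv_cflip_apply {n : ℕ} [NeZero n] (f g : ZMod n → ℝ) (k : ZMod n) :
    cconv f (cflip g) k = ∑ l, f (k + l) * g l := by
  rw [cconv, ← Equiv.sum_comp (Equiv.addLeft k)]
  simp [cflip]

theorem hankelExt_cconv_cflip_eq_hankelSq_mul {n d p : ℕ} [NeZero n] (f : ZMod n → ℝ)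
    (g : Fin p → ZMod n → ℝ) :
    hankelExt d p (Matrix.of fun k c => cconv f (cflip (g c)) k) =
      hankelSq f *
        Matrix.of fun l (cj : Fin p × Fin d) => g cj.1 (l - ((cj.2 : ℕ) : ZMod n)) := by
  ext i ⟨c, j⟩
  simp only [hankelExt, hankelSq, Matrix.mul_apply, Matrix.of_apply, cconv_cflip_apply]
  conv_rhs => rw [← Equiv.sum_comp (Equiv.addLeft ((j : ℕ) : ZMod n))]
  simp [add_assoc]

theorem extended_hankel_rank_bound_general {n d p m : ℕ} [NeZero n]
    (f : ZMod n → ℝ) (h : Fin p → Fin m → ℝ)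
    (Z : Matrix (ZMod n) (Fin p) ℝ)
    (hZ : ∀ (c : Fin p) (k : ZMod n), Z k c = cconv f (cflip (zpad (h c))) k) :
    hankelExt d p Z = hankelSq f * circBlocks d p h ∧
    (hankelExt d p Z).rank ≤ min (hankelSq f).rank (p * d) := by
  have hZ' : Z = Matrix.of fun k c => cconv f (cflip (zpad (h c))) k :=
    Matrix.ext fun k c => hZ c k
  have factor : hankelExt d p Z = hankelSq f * circBlocks d p h := by
    rw [hZ', hankelExt_cconv_cflip_eq_hankelSq_mul]
    rfl
  refine ⟨factor, factor ▸ le_min (rank_mul_le_left _ _) ?_⟩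
  exact (rank_le_card_width _).trans_eq (by simp)

/-- rank bound for the extended Hankel matrix: if each channel
is `z_i = f ⊛ h̄_i`, then `H_{d|p}(Z) = H_n(f)·[C_d(h_1) … C_d(h_p)]` and
`rank H_{d|p}(Z) ≤ min{rank H_n(f), p·d}`. -/
theorem extended_hankel_rank_bound {n d p m : ℕ} [NeZero n] (hm : m ≤ n)
    (f : ZMod n → ℝ) (h : Fin p → Fin m → ℝ)
    (Z : Matrix (ZMod n) (Fin p) ℝ)
    (hZ : ∀ (c : Fin p) (k : ZMod n), Z k c = cconv f (cflip (zpad (h c))) k) :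
    hankelExt d p Z = hankelSq f * circBlocks d p h ∧
    (hankelExt d p Z).rank ≤ min (hankelSq f).rank (p * d) :=
  extended_hankel_rank_bound_general f h Z hZ
end
end

section
/- (Fourier PR condition, single channel) Suppose Φ̃Φᵀ = I_n. Then the perfect reconstruction f = H_d^†(Φ̃(ΦᵀH_d(f)Ψ)Ψ̃ᵀ) holds for all f ∈ ℝⁿ if and only if (1/d)·Σ_{i=1}^q conj(ψ̂_i[ω])·(ψ̃_i)^[ω] = 1 for every discrete frequency ω, where ψ̂ denotes the n-point discrete Fourier transform of the zero-padded filter. -/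
open Matrix BigOperators Finset

noncomputable section

/-- `n`-point DFT of a length-`d` filter zero-padded to length `n`. -/
def dftPad (n : ℕ) {d : ℕ} (ψ : Fin d → ℝ) (ω : ZMod n) : ℂ :=
  ∑ k : Fin d, (ψ k : ℂ) *
    Complex.exp (-2 * Real.pi * Complex.I * (k : ℕ) * (ZMod.val ω) / n)

/-!
With `Φ̃Φᵀ = I` the reconstruction map collapses to `f ↦ d⁻¹ (g ⊛ f)`, where
`g = Σᵢ ψ̄ᵢ ⊛ ψ̃ᵢ` is obtained by summing `Ψ Ψ̃ᵀ` along wrapped diagonals. Hence perfect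
reconstruction holds iff `g = d δ₀`. On the other side, `Σᵢ conj(ψ̂ᵢ[ω]) ψ̃̂ᵢ[ω]` is exactly the DFT
of `g` at `ω`; the DFT is injective and sends `d δ₀` to the constant `d`, so the Fourier condition
also says `g = d δ₀`.
-/

open ZMod

/-- For `M = Ψ Ψ̃ᵀ` this is `Σᵢ ψ̄ᵢ ⊛ ψ̃ᵢ`, the sum of the flipped-filter convolutions of the
paper, aliased modulo `n`. -/
def cyclicDiagSum {n d : ℕ} {R : Type*} [AddCommMonoid R] (M : Matrix (Fin d) (Fin d) R)
    (t : ZMod n) : R :=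
  ∑ c : Fin d, ∑ b : Fin d, if ((b : ℕ) : ZMod n) - ((c : ℕ) : ZMod n) = t then M c b else 0

lemma sum_sum_mul_eq_sum_cyclicDiagSum_mul {n d : ℕ} [NeZero n] {R : Type*}
    [NonUnitalNonAssocSemiring R] (M : Matrix (Fin d) (Fin d) R) (h : ZMod n → R) :
    ∑ c : Fin d, ∑ b : Fin d, M c b * h (((b : ℕ) : ZMod n) - ((c : ℕ) : ZMod n)) =
      ∑ t : ZMod n, cyclicDiagSum M t * h t := by
  symm
  simp only [cyclicDiagSum, Finset.sum_mul, ite_mul, zero_mul]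
  rw [Finset.sum_comm]
  refine Finset.sum_congr rfl fun c _ => ?_
  rw [Finset.sum_comm]
  exact Finset.sum_congr rfl fun b _ => by simp

lemma map_cyclicDiagSum {n d : ℕ} {R S F : Type*} [AddCommMonoid R] [AddCommMonoid S]
    [FunLike F R S] [AddMonoidHomClass F R S] (φ : F) (M : Matrix (Fin d) (Fin d) R)
    (t : ZMod n) : φ (cyclicDiagSum M t) = cyclicDiagSum (M.map φ) t := by
  simp [cyclicDiagSum, map_sum, apply_ite φ]

section Reconstruction

variable {n d : ℕ} [NeZero n]

lemma hdag_apply (B : Matrix (ZMod n) (Fin d) ℝ) (k : ZMod n) :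
    hdag B k = (d : ℝ)⁻¹ * ∑ b : Fin d, B (k - ((b : ℕ) : ZMod n)) b := by
  have hpick : ∀ b : Fin d,
      ∑ a : ZMod n, (Pi.single k 1 : ZMod n → ℝ) (a + ((b : ℕ) : ZMod n)) * B a b =
        B (k - ((b : ℕ) : ZMod n)) b := fun b => by
    simp only [Pi.single_apply, ← eq_sub_iff_add_eq, ite_mul, one_mul, zero_mul,
      Finset.sum_ite_eq', Finset.mem_univ, if_true]
  have hsqrt : (Real.sqrt d)⁻¹ * (Real.sqrt d)⁻¹ = (d : ℝ)⁻¹ := by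
    rw [← mul_inv, Real.mul_self_sqrt d.cast_nonneg]
  simp only [hdag, frobInner, hankE, Matrix.smul_apply, smul_eq_mul, mul_assoc,
    ← Finset.mul_sum, ← hsqrt]
  rw [Finset.sum_comm]
  simp only [hankel, Matrix.of_apply, hpick]

lemma hdag_hankel_mul (f : ZMod n → ℝ) (M : Matrix (Fin d) (Fin d) ℝ) :
    hdag (hankel d f * M) = (d : ℝ)⁻¹ • cconv (cyclicDiagSum M) f := by
  funext k
  rw [hdag_apply, Pi.smul_apply, smul_eq_mul, cconv,
    ← sum_sum_mul_eq_sum_cyclicDiagSum_mul M (fun t => f (k - t)), Finset.sum_comm]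
  congr 1
  refine Finset.sum_congr rfl fun b _ => ?_
  rw [Matrix.mul_apply]
  refine Finset.sum_congr rfl fun c _ => ?_
  rw [hankel, Matrix.of_apply, mul_comm]
  congr 2
  ring

lemma cconv_single_zero_left (c : ℝ) (f : ZMod n → ℝ) : cconv (Pi.single 0 c) f = c • f := by
  funext k
  simp [cconv, Pi.single_apply]

lemma cconv_single_zero_right (g : ZMod n → ℝ) : cconv g (Pi.single 0 1) = g := by
  funext k
  simp [cconv, Pi.single_apply, sub_eq_zero]

lemma forall_cconv_eq_smul_iff (g : ZMod n → ℝ) (c : ℝ) :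
    (∀ f, cconv g f = c • f) ↔ g = Pi.single 0 c := by
  refine ⟨fun h => ?_, fun h f => h ▸ cconv_single_zero_left c f⟩
  rw [← cconv_single_zero_right g, h, ← Pi.single_smul, smul_eq_mul, mul_one]

end Reconstruction

lemma Complex.ofReal_comp_eq_single_iff {ι : Type*} [DecidableEq ι] (g : ι → ℝ) (i : ι) (c : ℝ) :
    (fun t => (g t : ℂ)) = Pi.single i (c : ℂ) ↔ g = Pi.single i c := by
  rw [Pi.single_op (fun _ => ((↑) : ℝ → ℂ)) (fun _ => Complex.ofReal_zero)]
  exact Complex.ofReal_injective.comp_left.eq_iff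

section Fourier

variable {n d : ℕ} [NeZero n]

lemma dftPad_eq_sum_stdAddChar (ψ : Fin d → ℝ) (ω : ZMod n) :
    dftPad n ψ ω = ∑ k : Fin d, stdAddChar (-(((k : ℕ) : ZMod n) * ω)) * (ψ k : ℂ) := by
  refine Finset.sum_congr rfl fun k _ => ?_
  have hcast : -(((k : ℕ) : ZMod n) * ω) = ((-((k : ℕ) * ω.val : ℕ) : ℤ) : ZMod n) := by
    push_cast [natCast_zmod_val]
    ring
  rw [mul_comm, hcast, stdAddChar_coe]
  congr 2
  push_cast
  ring

lemma conj_dftPad_mul_dftPad (ψ φ : Fin d → ℝ) (ω : ZMod n) :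
    starRingEnd ℂ (dftPad n ψ ω) * dftPad n φ ω =
      ∑ c : Fin d, ∑ b : Fin d, ((ψ c * φ b : ℝ) : ℂ) *
        stdAddChar (-((((b : ℕ) : ZMod n) - ((c : ℕ) : ZMod n)) * ω)) := by
  simp only [dftPad_eq_sum_stdAddChar, map_sum, map_mul, ← AddChar.map_neg_eq_conj,
    Complex.conj_ofReal, neg_neg, Finset.sum_mul_sum]
  refine Finset.sum_congr rfl fun c _ => Finset.sum_congr rfl fun b _ => ?_
  rw [sub_mul, neg_sub, sub_eq_add_neg, AddChar.map_add_eq_mul]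
  push_cast
  ring

lemma sum_conj_dftPad_mul_dftPad {q : ℕ} (Psi Psit : Matrix (Fin d) (Fin q) ℝ) (ω : ZMod n) :
    ∑ i : Fin q, starRingEnd ℂ (dftPad n (fun l => Psi l i) ω) * dftPad n (fun l => Psit l i) ω =
      dft (fun t => ((cyclicDiagSum (Psi * Psitᵀ) t : ℝ) : ℂ)) ω := by
  have hM : ∀ c b, (((Psi * Psitᵀ) c b : ℝ) : ℂ) = ∑ i, ((Psi c i * Psit b i : ℝ) : ℂ) := by
    simp [Matrix.mul_apply]
  simp only [conj_dftPad_mul_dftPad, dft_apply, smul_eq_mul, ← Complex.ofRealHom_eq_coe,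
    map_cyclicDiagSum Complex.ofRealHom (Psi * Psitᵀ), mul_comm (stdAddChar _)]
  rw [← sum_sum_mul_eq_sum_cyclicDiagSum_mul, Finset.sum_comm]
  refine Finset.sum_congr rfl fun c _ => ?_
  rw [Finset.sum_comm]
  refine Finset.sum_congr rfl fun b _ => ?_
  simp only [Matrix.map_apply, Complex.ofRealHom_eq_coe, hM, Finset.sum_mul, mul_comm]

lemma forall_dft_eq_const_iff (g : ZMod n → ℂ) (c : ℂ) :
    (∀ ω, dft g ω = c) ↔ g = Pi.single 0 c := by
  have hsingle : dft (Pi.single (0 : ZMod n) c) = fun _ => c := by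
    funext ω
    simp [dft_apply, Pi.single_apply]
  rw [← dft.injective.eq_iff, hsingle, funext_iff]

end Fourier

/-- Fourier PR condition, single channel: given `Φ̃Φᵀ = I_n`,
perfect reconstruction `f = H_d^†(Φ̃(ΦᵀH_d(f)Ψ)Ψ̃ᵀ)` holds for all `f` iff
`(1/d) Σ_i conj(ψ̂_i[ω]) ψ̃̂_i[ω] = 1` for every discrete frequency `ω`. -/
theorem fourier_PR_condition {n d q m : ℕ} [NeZero n] (hd : 0 < d)
    (Phi Phit : Matrix (ZMod n) (Fin m) ℝ) (hPhi : Phit * Phiᵀ = 1)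
    (Psi Psit : Matrix (Fin d) (Fin q) ℝ) :
    (∀ f : ZMod n → ℝ, f = hdag (Phit * (Phiᵀ * hankel d f * Psi) * Psitᵀ)) ↔
    (∀ ω : ZMod n,
      (d : ℂ)⁻¹ * ∑ i : Fin q,
        (starRingEnd ℂ) (dftPad n (fun l => Psi l i) ω) *
          dftPad n (fun l => Psit l i) ω = 1) := by
  have hdR : (d : ℝ) ≠ 0 := Nat.cast_ne_zero.mpr hd.ne'
  have hdC : (d : ℂ) ≠ 0 := Nat.cast_ne_zero.mpr hd.ne'
  have hframe : ∀ f : ZMod n → ℝ,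
      Phit * (Phiᵀ * hankel d f * Psi) * Psitᵀ = hankel d f * (Psi * Psitᵀ) := fun f => by
    simp only [← Matrix.mul_assoc, hPhi, Matrix.one_mul]
  simp only [hframe, hdag_hankel_mul, eq_inv_smul_iff₀ hdR, sum_conj_dftPad_mul_dftPad,
    inv_mul_eq_one₀ hdC]
  generalize cyclicDiagSum (Psi * Psitᵀ) = g
  simp only [eq_comm (a := (d : ℝ) • _), eq_comm (a := (d : ℂ)), forall_cconv_eq_smul_iff,
    forall_dft_eq_const_iff]
  rw [← Complex.ofReal_natCast, Complex.ofReal_comp_eq_single_iff]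
end
end

section
/- (PR under ReLU with opposite-phase filters) Let Φ, Φ̃ ∈ ℝ^{n×n} with Φ̃Φᵀ = I_n, and let Ψ₊, Ψ̃₊ ∈ ℝ^{pd×m} with Ψ₊Ψ̃₊ᵀ = I_{pd}. Setting Ψ = [Ψ₊ −Ψ₊] and Ψ̃ = [Ψ̃₊ −Ψ̃₊], for every X ∈ ℝ^{n×p}: X = H_{d|p}^†( Φ̃ ρ(Φᵀ H_{d|p}(X) Ψ) Ψ̃ᵀ ), where ρ is the entrywise ReLU. -/
open Matrix BigOperators Finset

noncomputable section

/-! Since `ρ(B) - ρ(-B) = B`, the opposite-phase pair `Ψ = [Ψ₊ -Ψ₊]`, `Ψ̃ = [Ψ̃₊ -Ψ̃₊]` makes the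
ReLU invisible: `Φ̃ ρ(Φᵀ H Ψ) Ψ̃ᵀ = Φ̃ Φᵀ H Ψ₊ Ψ̃₊ᵀ = H` for `H = H_{d|p}(X)`. Finally `H^†` is a left
inverse of the Hankel lifting because each of the `d` columns of a wrap-around Hankel matrix is a
cyclic shift of the signal, so `⟨H_d(e_k), H_d(f)⟩ = d f(k)`. -/

lemma reluM_sub_reluM_neg {I J : Type*} (A : Matrix I J ℝ) :
    reluM A - reluM (-A) = A := by
  ext i j
  simp only [reluM, Matrix.sub_apply, of_apply, Matrix.neg_apply]
  rw [max_comm, max_comm 0]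
  exact max_zero_sub_max_neg_zero_eq_self (A i j)

lemma reluM_fromCols {I J K : Type*} (A : Matrix I J ℝ) (B : Matrix I K ℝ) :
    reluM (fromCols A B) = fromCols (reluM A) (reluM B) := by
  ext i (j | k) <;> rfl

lemma reluM_mul_fromCols_neg_mul_transpose {I J K : Type*} [Fintype J] [Fintype K]
    (A : Matrix I J ℝ) (P Q : Matrix J K ℝ) :
    reluM (A * fromCols P (-P)) * (fromCols Q (-Q))ᵀ = A * P * Qᵀ := by
  rw [mul_fromCols, reluM_fromCols, transpose_fromCols, fromCols_mul_fromRows,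
    Matrix.mul_neg, transpose_neg, Matrix.mul_neg, ← sub_eq_add_neg, ← Matrix.sub_mul,
    reluM_sub_reluM_neg]

lemma frobInner_hankel {n : ℕ} [NeZero n] (d : ℕ) (f g : ZMod n → ℝ) :
    frobInner (hankel d f) (hankel d g) = d * ∑ i, f i * g i := by
  have shift : ∀ j : Fin d, ∑ i : ZMod n, f (i + ((j : ℕ) : ZMod n)) * g (i + ((j : ℕ) : ZMod n))
      = ∑ i, f i * g i := fun j =>
    Equiv.sum_comp (Equiv.addRight ((j : ℕ) : ZMod n)) (fun i => f i * g i)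
  simp only [frobInner, hankel, of_apply]
  rw [Finset.sum_comm, Finset.sum_congr rfl (fun j _ => shift j), Finset.sum_const,
    Finset.card_univ, Fintype.card_fin, nsmul_eq_mul]

lemma frobInner_smul_left {I J : Type*} [Fintype I] [Fintype J] (c : ℝ) (A B : Matrix I J ℝ) :
    frobInner (c • A) B = c * frobInner A B := by
  simp only [frobInner, Matrix.smul_apply, smul_eq_mul, Finset.mul_sum, mul_assoc]

lemma hdag_hankel {n d : ℕ} [NeZero n] (hd : 0 < d) (f : ZMod n → ℝ) :
    hdag (hankel d f) = f := by
  funext k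
  have hsqrt : Real.sqrt d * Real.sqrt d = d := Real.mul_self_sqrt (Nat.cast_nonneg d)
  have hd' : (d : ℝ) ≠ 0 := by exact_mod_cast hd.ne'
  simp only [hdag, hankE, frobInner_smul_left, frobInner_hankel, Pi.single_apply, ite_mul,
    one_mul, zero_mul, Finset.sum_ite_eq', Finset.mem_univ, if_true]
  rw [← mul_assoc, ← mul_inv, hsqrt, ← mul_assoc, inv_mul_cancel₀ hd', one_mul]

lemma hdagExt_hankelExt {n d p : ℕ} [NeZero n] (hd : 0 < d) (X : Matrix (ZMod n) (Fin p) ℝ) :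
    hdagExt (hankelExt d p X) = X := by
  ext k c
  exact congrFun (hdag_hankel hd fun i => X i c) k

/-- PR under ReLU with opposite-phase filters: with
`Φ̃Φᵀ = I_n` and `Ψ₊Ψ̃₊ᵀ = I_{pd}`, setting `Ψ = [Ψ₊ −Ψ₊]`,
`Ψ̃ = [Ψ̃₊ −Ψ̃₊]`, every `X ∈ ℝ^{n×p}` satisfies
`X = H_{d|p}^†(Φ̃ ρ(Φᵀ H_{d|p}(X) Ψ) Ψ̃ᵀ)`. -/
theorem PR_under_ReLU {n d p m : ℕ} [NeZero n] (hd : 0 < d)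
    (Phi Phit : Matrix (ZMod n) (ZMod n) ℝ) (hPhi : Phit * Phiᵀ = 1)
    (Pp Ppt : Matrix (Fin p × Fin d) (Fin m) ℝ) (hP : Pp * Pptᵀ = 1)
    (X : Matrix (ZMod n) (Fin p) ℝ) :
    X = hdagExt (Phit *
      reluM (Phiᵀ * hankelExt d p X * Matrix.fromCols Pp (-Pp)) *
      (Matrix.fromCols Ppt (-Ppt))ᵀ) := by
  have relu_transparent : Phit * reluM (Phiᵀ * hankelExt d p X * fromCols Pp (-Pp)) *
      (fromCols Ppt (-Ppt))ᵀ = hankelExt d p X := by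
    rw [Matrix.mul_assoc, reluM_mul_fromCols_neg_mul_transpose, Matrix.mul_assoc _ Pp, hP,
      Matrix.mul_one, ← Matrix.mul_assoc, hPhi, Matrix.one_mul]
  rw [relu_transparent, hdagExt_hankelExt hd]
end
end
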